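/- Let δ > 2 and 0 < ρ < δ, set α_k = δ^k and η_k = ρ^k for k ≥ 1, fix P ≥ 1, and let (λ_{pk})_{1≤p≤P, k≥1} be mutually independent real random variables with λ_{pk} distributed as GDP(α_k, η_k). Then there exists a constant C > 0 depending only on δ and ρ such that for every ε ∈ (0, 1): if K₀ is any integer with K₀ ≥ C·(1 + log(P/ε²)), then for every K ≥ K₀, with probability greater than 1 − ε, for all i, j ∈ {1, …, P} the series ∑_{k=K+1}^∞ |λ_{ik}||λ_{jk}| converges and is strictly less than ε. In particular K₀ can be taken of order (log(δ/ρ))^{−1} log(P/ε²). -/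

import Mathlib

/-!
Threshold each loading at `|λ_{pk}| ≤ θ^k`, where `θ³ = ρ/δ`. By Bernoulli's inequality a
GDP(δ^k, ρ^k) variable exceeds `θ^k` with probability at most `(ρ/(δθ))^k = θ^{2k}`, so a union
bound over `p ≤ P` and `k > K` shows that all thresholds hold outside an event of probability at
most `P θ^{2(K+1)} / (1 - θ²)`. Where they hold, every term `|λ_{ik}| |λ_{jk}|` with `k > K` is at
most `θ^{2k}`, so each tail series is bounded by the same geometric tail. Both bounds are below
`ε² < ε` once `K + 1 ≥ C (1 + log (P/ε²))`, with `C` depending only on `θ`.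
-/

open MeasureTheory ProbabilityTheory

/-- Density of the generalized double Pareto distribution GDP(α, η). -/
noncomputable def gdpPdf (α η x : ℝ) : ℝ :=
  (α / (2 * η)) * (1 + |x| / η) ^ (-(α + 1))

/-- The generalized double Pareto distribution GDP(α, η) as a measure on ℝ. -/
noncomputable def gdpMeasure (α η : ℝ) : Measure ℝ :=
  MeasureTheory.volume.withDensity (fun x => ENNReal.ofReal (gdpPdf α η x))

/-- `X` has the GDP(α, η) distribution under `μ`. -/
def HasGDP {Ω : Type*} [MeasurableSpace Ω] (μ : Measure Ω) (X : Ω → ℝ) (α η : ℝ) : Prop :=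
  Measurable X ∧ Measure.map X μ = gdpMeasure α η

open Set Filter Topology

noncomputable def gdpTail (a η t : ℝ) : ℝ :=
  (1 + t / η) ^ (-a)

lemma hasDerivAt_gdpTail {a η x : ℝ} (hη : 0 < η) (hx : 0 ≤ x) :
    HasDerivAt (gdpTail a η) (-(2 * gdpPdf a η x)) x := by
  have hpos : 0 < 1 + x / η := by positivity
  refine (((hasDerivAt_id x).div_const η).const_add 1).rpow_const (p := -a)
    (Or.inl hpos.ne') |>.congr_deriv ?_
  rw [gdpPdf, abs_of_nonneg hx, sub_eq_add_neg, neg_add, id]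
  field_simp

lemma tendsto_gdpTail_atTop {a η : ℝ} (ha : 0 < a) (hη : 0 < η) :
    Tendsto (gdpTail a η) atTop (𝓝 0) :=
  (tendsto_rpow_neg_atTop ha).comp
    (tendsto_atTop_add_const_left _ 1 (tendsto_id.atTop_div_const hη))

lemma lintegral_Ioi_gdpPdf {a η t : ℝ} (ha : 0 < a) (hη : 0 < η) (ht : 0 ≤ t) :
    ∫⁻ x in Ioi t, ENNReal.ofReal (gdpPdf a η x) = ENNReal.ofReal (gdpTail a η t / 2) := by
  have hderiv : ∀ x ∈ Ici t, HasDerivAt (fun y => -gdpTail a η y / 2) (gdpPdf a η x) x :=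
    fun x hx => ((hasDerivAt_gdpTail hη (ht.trans hx)).neg.div_const 2).congr_deriv (by ring)
  have hnonneg : ∀ x, 0 ≤ gdpPdf a η x := fun x => by unfold gdpPdf; positivity
  have hlim : Tendsto (fun y => -gdpTail a η y / 2) atTop (𝓝 0) := by
    simpa using (tendsto_gdpTail_atTop ha hη).neg.div_const 2
  rw [← ofReal_integral_eq_lintegral_ofReal
      (integrableOn_Ioi_deriv_of_nonneg' hderiv (fun x _ => hnonneg x) hlim)
      (Eventually.of_forall hnonneg),
    integral_Ioi_of_hasDerivAt_of_nonneg' hderiv (fun x _ => hnonneg x) hlim, zero_sub, neg_div,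
    neg_neg]

lemma gdpPdf_neg (a η x : ℝ) : gdpPdf a η (-x) = gdpPdf a η x := by
  rw [gdpPdf, gdpPdf, abs_neg]

lemma lintegral_Iio_neg_gdpPdf (a η t : ℝ) :
    ∫⁻ x in Iio (-t), ENNReal.ofReal (gdpPdf a η x) =
      ∫⁻ x in Ioi t, ENNReal.ofReal (gdpPdf a η x) := by
  have h := (Measure.measurePreserving_neg (volume : Measure ℝ)).setLIntegral_comp_preimage_emb
    (MeasurableEquiv.neg ℝ).measurableEmbedding (fun x => ENNReal.ofReal (gdpPdf a η x)) (Ioi t)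
  simpa only [gdpPdf_neg, neg_preimage, neg_Ioi] using h

lemma gdpMeasure_abs_gt {a η t : ℝ} (ha : 0 < a) (hη : 0 < η) (ht : 0 ≤ t) :
    gdpMeasure a η {x | t < |x|} = ENNReal.ofReal (gdpTail a η t) := by
  have hsplit : {x : ℝ | t < |x|} = Iio (-t) ∪ Ioi t := by
    ext x
    simp only [mem_ofPred_eq, mem_union, mem_Iio, mem_Ioi, lt_abs, lt_neg, or_comm]
  have hdisj : Disjoint (Iio (-t)) (Ioi t) :=
    (Iio_disjoint_Ici (by linarith)).mono_right Ioi_subset_Ici_self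
  have htail : 0 ≤ gdpTail a η t / 2 := by unfold gdpTail; positivity
  rw [hsplit, gdpMeasure, measure_union hdisj measurableSet_Ioi,
    withDensity_apply _ measurableSet_Iio, withDensity_apply _ measurableSet_Ioi,
    lintegral_Iio_neg_gdpPdf, lintegral_Ioi_gdpPdf ha hη ht, ← ENNReal.ofReal_add htail htail,
    add_halves]

lemma gdpMeasure_abs_gt_le_div {a η t : ℝ} (ha : 1 ≤ a) (hη : 0 < η) (ht : 0 < t) :
    gdpMeasure a η {x | t < |x|} ≤ ENNReal.ofReal (η / (a * t)) := by
  rw [gdpMeasure_abs_gt (by linarith) hη ht.le, gdpTail]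
  refine ENNReal.ofReal_le_ofReal ?_
  have hbernoulli : a * (t / η) ≤ (1 + t / η) ^ a := by
    linarith [one_add_mul_self_le_rpow_one_add (s := t / η) (by linarith [div_pos ht hη]) ha]
  calc (1 + t / η) ^ (-a) = ((1 + t / η) ^ a)⁻¹ := Real.rpow_neg (by positivity) a
    _ ≤ (a * (t / η))⁻¹ := inv_anti₀ (by positivity) hbernoulli
    _ = η / (a * t) := by field_simp

lemma exists_pos_lt_one_div_mul_eq_sq {δ ρ : ℝ} (hρ : 0 < ρ) (hρδ : ρ < δ) :
    ∃ θ : ℝ, 0 < θ ∧ θ < 1 ∧ ρ / (δ * θ) = θ ^ 2 := by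
  have hδ : 0 < δ := hρ.trans hρδ
  set θ : ℝ := (ρ / δ) ^ ((3 : ℕ)⁻¹ : ℝ)
  have hθ3 : θ ^ 3 = ρ / δ := Real.rpow_inv_natCast_pow (by positivity) (by norm_num)
  have hθ0 : 0 < θ := by positivity
  refine ⟨θ, hθ0, ?_, ?_⟩
  · refine (pow_lt_one_iff_of_nonneg hθ0.le (n := 3) (by norm_num)).mp ?_
    rwa [hθ3, div_lt_one hδ]
  · rw [div_eq_iff (by positivity), show ρ = δ * θ ^ 3 by rw [hθ3]; field_simp]
    ring

lemma exists_pos_forall_mul_pow_le {q B : ℝ} (hq0 : 0 < q) (hq1 : q < 1) (hB : 0 < B) :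
    ∃ C : ℝ, 0 < C ∧ ∀ x : ℝ, 1 ≤ x → ∀ n : ℕ, C * (1 + Real.log x) ≤ n → x * q ^ n ≤ B := by
  have hc : 0 < -Real.log q := neg_pos.mpr (Real.log_neg hq0 hq1)
  set M := max (-Real.log B) 1
  refine ⟨M / -Real.log q, by positivity, fun x hx n hn => ?_⟩
  have hlogx : 0 ≤ Real.log x := Real.log_nonneg hx
  have hnc : M * (1 + Real.log x) ≤ n * -Real.log q := by
    calc M * (1 + Real.log x) = M / -Real.log q * (1 + Real.log x) * -Real.log q := by
          rw [mul_right_comm, div_mul_cancel₀ _ hc.ne']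
      _ ≤ n * -Real.log q := by gcongr
  have hM : -Real.log B + Real.log x ≤ M * (1 + Real.log x) := by
    nlinarith [le_max_left (-Real.log B) 1, le_max_right (-Real.log B) 1]
  rw [← Real.log_le_log_iff (by positivity) hB, Real.log_mul (by positivity) (by positivity),
    Real.log_pow]
  linarith

lemma exists_pos_forall_card_mul_geometric_tail_le_sq {q : ℝ} (hq0 : 0 < q) (hq1 : q < 1) :
    ∃ C : ℝ, 0 < C ∧ ∀ (P : ℕ) (ε : ℝ), 0 < P → 0 < ε → ε < 1 → ∀ n : ℕ,
      C * (1 + Real.log (P / ε ^ 2)) ≤ n → P * (q ^ n / (1 - q)) ≤ ε ^ 2 := by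
  obtain ⟨C, hC, hdecay⟩ := exists_pos_forall_mul_pow_le hq0 hq1 (sub_pos.mpr hq1)
  refine ⟨C, hC, fun P ε hP hε0 hε1 n hn => ?_⟩
  have hP1 : (1 : ℝ) ≤ P := by exact_mod_cast hP
  have hx : 1 ≤ (P : ℝ) / ε ^ 2 := by rw [le_div_iff₀ (by positivity)]; nlinarith
  have := hdecay _ hx n hn
  rw [div_mul_eq_mul_div, div_le_iff₀ (by positivity)] at this
  rw [mul_div_assoc', div_le_iff₀ (sub_pos.mpr hq1)]
  linarith

lemma hasSum_pow_add {q : ℝ} (hq0 : 0 ≤ q) (hq1 : q < 1) (m : ℕ) :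
    HasSum (fun k : ℕ => q ^ (k + m)) (q ^ m / (1 - q)) := by
  simpa only [pow_add, mul_comm, div_eq_mul_inv] using
    (hasSum_geometric_of_lt_one hq0 hq1).mul_left (q ^ m)

lemma summable_abs_mul_abs_and_tsum_le {f g : ℕ → ℝ} {θ : ℝ} {m : ℕ} (hθ0 : 0 ≤ θ)
    (hθ1 : θ < 1) (hf : ∀ k, |f k| ≤ θ ^ (k + m)) (hg : ∀ k, |g k| ≤ θ ^ (k + m)) :
    Summable (fun k => |f k| * |g k|) ∧ ∑' k, |f k| * |g k| ≤ (θ ^ 2) ^ m / (1 - θ ^ 2) := by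
  have hgeom := hasSum_pow_add (sq_nonneg θ) (by nlinarith) m
  have hle : ∀ k, |f k| * |g k| ≤ (θ ^ 2) ^ (k + m) := fun k => by
    rw [show (θ ^ 2) ^ (k + m) = θ ^ (k + m) * θ ^ (k + m) by ring]
    exact mul_le_mul (hf k) (hg k) (abs_nonneg _) (pow_nonneg hθ0 _)
  have hsum : Summable (fun k => |f k| * |g k|) :=
    hgeom.summable.of_nonneg_of_le (fun k => by positivity) hle
  exact ⟨hsum, hasSum_le hle hsum.hasSum hgeom⟩

section Measure

variable {Ω : Type*} [MeasurableSpace Ω] {μ : Measure Ω}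

lemma measure_iUnion_le_card_mul_geometric {ι : Type*} [Fintype ι] {A : ι × ℕ → Set Ω} {q : ℝ}
    (hq0 : 0 ≤ q) (hq1 : q < 1) (m : ℕ) (hA : ∀ i k, μ (A (i, k)) ≤ ENNReal.ofReal (q ^ (k + m))) :
    μ (⋃ ik, A ik) ≤ ENNReal.ofReal (Fintype.card ι * (q ^ m / (1 - q))) := by
  have hgeom := hasSum_pow_add hq0 hq1 m
  calc μ (⋃ ik, A ik) ≤ ∑' ik : ι × ℕ, μ (A ik) := measure_iUnion_le _
    _ ≤ ∑' ik : ι × ℕ, ENNReal.ofReal (q ^ (ik.2 + m)) := ENNReal.tsum_le_tsum fun ik => hA _ _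
    _ = ∑ _i : ι, ENNReal.ofReal (q ^ m / (1 - q)) := by
      rw [ENNReal.tsum_prod', tsum_fintype]
      refine Finset.sum_congr rfl fun _ _ => ?_
      rw [← ENNReal.ofReal_tsum_of_nonneg (fun k => pow_nonneg hq0 _) hgeom.summable,
        hgeom.tsum_eq]
    _ = ENNReal.ofReal (Fintype.card ι * (q ^ m / (1 - q))) := by
      rw [Finset.sum_const, Finset.card_univ, nsmul_eq_mul, ENNReal.ofReal_mul (by positivity),
        ENNReal.ofReal_natCast]

lemma ofReal_one_sub_lt_measure_compl [IsProbabilityMeasure μ] {A : Set Ω} (hA : MeasurableSet A)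
    {s ε : ℝ} (hs : 0 ≤ s) (hsε : s < ε) (hε : ε ≤ 1) (hμA : μ A ≤ ENNReal.ofReal s) :
    ENNReal.ofReal (1 - ε) < μ Aᶜ := by
  calc ENNReal.ofReal (1 - ε) < ENNReal.ofReal (1 - s) := by
        rw [ENNReal.ofReal_lt_ofReal_iff (by linarith)]; linarith
    _ = 1 - ENNReal.ofReal s := by rw [ENNReal.ofReal_sub 1 hs, ENNReal.ofReal_one]
    _ ≤ 1 - μ A := tsub_le_tsub_left hμA 1
    _ = μ Aᶜ := (prob_compl_eq_one_sub hA).symm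

lemma measure_pow_lt_abs_le {X : Ω → ℝ} (hX : Measurable X) {δ ρ θ : ℝ} (hδ : 1 ≤ δ)
    (hρ : 0 < ρ) (hθ : 0 < θ) {n : ℕ} (hlaw : Measure.map X μ = gdpMeasure (δ ^ n) (ρ ^ n)) :
    μ {ω | θ ^ n < |X ω|} ≤ ENNReal.ofReal ((ρ / (δ * θ)) ^ n) := by
  rw [← preimage_ofPred_eq (p := fun x => θ ^ n < |x|),
    ← Measure.map_apply hX (measurableSet_lt measurable_const measurable_abs), hlaw, div_pow,
    mul_pow]
  exact gdpMeasure_abs_gt_le_div (one_le_pow₀ hδ) (pow_pos hρ n) (pow_pos hθ n)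

end Measure

theorem gdp_truncation_close_condition_III_general {Ω : Type*} [MeasurableSpace Ω] (μ : Measure Ω)
    [IsProbabilityMeasure μ] (δ ρ : ℝ) (hδ : 2 < δ) (hρ0 : 0 < ρ) (hρδ : ρ < δ)
    (P : ℕ) (hP : 0 < P) (Λ : Fin P × ℕ → Ω → ℝ) (hmeas : ∀ pk, Measurable (Λ pk))
    (hlaw : ∀ (p : Fin P) (k : ℕ), 1 ≤ k →
      Measure.map (Λ (p, k)) μ = gdpMeasure (δ ^ k) (ρ ^ k)) :
    ∃ C : ℝ, 0 < C ∧ ∀ ε : ℝ, 0 < ε → ε < 1 → ∀ K₀ : ℕ,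
      C * (1 + Real.log ((P : ℝ) / ε ^ 2)) ≤ (K₀ : ℝ) → ∀ K : ℕ, K₀ ≤ K →
      ENNReal.ofReal (1 - ε) <
        μ {ω | ∀ i j : Fin P,
          Summable (fun k : ℕ => |Λ (i, k + K + 1) ω| * |Λ (j, k + K + 1) ω|) ∧
          (∑' k : ℕ, |Λ (i, k + K + 1) ω| * |Λ (j, k + K + 1) ω|) < ε} := by
  obtain ⟨θ, hθ0, hθ1, hratio⟩ := exists_pos_lt_one_div_mul_eq_sq hρ0 hρδ
  have hq1 : θ ^ 2 < 1 := by nlinarith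
  obtain ⟨C, hC, htail⟩ := exists_pos_forall_card_mul_geometric_tail_le_sq (by positivity) hq1
  refine ⟨C, hC, fun ε hε0 hε1 K₀ hK₀ K hK => ?_⟩
  have hs : P * ((θ ^ 2) ^ (K + 1) / (1 - θ ^ 2)) ≤ ε ^ 2 :=
    htail P ε hP hε0 hε1 (K + 1) (by push_cast; linarith [(Nat.cast_le (α := ℝ)).mpr hK])
  set bad := ⋃ pk : Fin P × ℕ, {ω | θ ^ (pk.2 + K + 1) < |Λ (pk.1, pk.2 + K + 1) ω|}
  have hbad : μ bad ≤ ENNReal.ofReal (P * ((θ ^ 2) ^ (K + 1) / (1 - θ ^ 2))) := by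
    refine (measure_iUnion_le_card_mul_geometric (by positivity) hq1 (K + 1) fun p k => ?_).trans_eq
      (by rw [Fintype.card_fin])
    rw [← hratio]
    exact measure_pow_lt_abs_le (hmeas _) (by linarith) hρ0 hθ0 (hlaw p _ (by omega))
  have hbadm : MeasurableSet bad := .iUnion fun _ => measurableSet_lt measurable_const (hmeas _).abs
  have hP1 : (1 : ℝ) ≤ P := by exact_mod_cast hP
  refine (ofReal_one_sub_lt_measure_compl hbadm (by positivity) (by nlinarith) hε1.le hbad).trans_le
    (measure_mono fun ω hω i j => ?_)
  simp only [bad, mem_compl_iff, mem_iUnion, mem_ofPred_eq, not_exists, not_lt] at hω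
  obtain ⟨hsum, hle⟩ := summable_abs_mul_abs_and_tsum_le (m := K + 1) hθ0.le hθ1
    (fun k => hω (i, k)) (fun k => hω (j, k))
  refine ⟨hsum, hle.trans_lt ?_⟩
  nlinarith [div_nonneg (pow_nonneg (sq_nonneg θ) (K + 1)) (sub_pos.mpr hq1).le]

theorem gdp_truncation_close_condition_III {Ω : Type*} [MeasurableSpace Ω] (μ : Measure Ω)
    [IsProbabilityMeasure μ] (δ ρ : ℝ) (hδ : 2 < δ) (hρ0 : 0 < ρ) (hρδ : ρ < δ)
    (P : ℕ) (hP : 0 < P) (Λ : Fin P × ℕ → Ω → ℝ) (hmeas : ∀ pk, Measurable (Λ pk))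
    (hindep : ProbabilityTheory.iIndepFun Λ μ)
    (hlaw : ∀ (p : Fin P) (k : ℕ), 1 ≤ k →
      Measure.map (Λ (p, k)) μ = gdpMeasure (δ ^ k) (ρ ^ k)) :
    ∃ C : ℝ, 0 < C ∧ ∀ ε : ℝ, 0 < ε → ε < 1 → ∀ K₀ : ℕ,
      C * (1 + Real.log ((P : ℝ) / ε ^ 2)) ≤ (K₀ : ℝ) → ∀ K : ℕ, K₀ ≤ K →
      ENNReal.ofReal (1 - ε) <
        μ {ω | ∀ i j : Fin P,
          Summable (fun k : ℕ => |Λ (i, k + K + 1) ω| * |Λ (j, k + K + 1) ω|) ∧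
          (∑' k : ℕ, |Λ (i, k + K + 1) ω| * |Λ (j, k + K + 1) ω|) < ε} :=
  gdp_truncation_close_condition_III_general μ δ ρ hδ hρ0 hρδ P hP Λ hmeas hlaw
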